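/- Let Y be a real-valued random variable with all absolute moments finite and E[Y]≠0, and fix a nonzero real λ. Then for every real number x and every integer n≥0, β_{n,λ}^Y(x) = Σ_{j=0}^{n} Σ_{k=0}^{j} C(n,j) β_{n−j,λ}^Y ⟨x⟩_{k,λ} (−1)^{j−k} S_{1,λ}^Y(j,k), where C(n,j) is the binomial coefficient. -/

import Mathlib

open MeasureTheory Finset

noncomputable section

/-- The degenerate falling factorial `(x)_{n,λ} = x(x-λ)⋯(x-(n-1)λ)`. -/
def dff (lam x : ℝ) (n : ℕ) : ℝ := ∏ i ∈ Finset.range n, (x - i * lam)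

/-- The degenerate rising factorial `⟨x⟩_{n,λ} = x(x+λ)⋯(x+(n-1)λ)`. -/
def drf (lam x : ℝ) (n : ℕ) : ℝ := ∏ i ∈ Finset.range n, (x + i * lam)

/-- The ordinary falling factorial `(x)_n = x(x-1)⋯(x-n+1)`. -/
def ffall (x : ℝ) (n : ℕ) : ℝ := ∏ i ∈ Finset.range n, (x - i)

/-- The ordinary rising factorial `⟨x⟩_n = x(x+1)⋯(x+n-1)`. -/
def frise (x : ℝ) (n : ℕ) : ℝ := ∏ i ∈ Finset.range n, (x + i)

/-- Composition `f ∘ g` of formal power series, valid when `g` has zero constant term. -/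
def pscomp (f g : PowerSeries ℝ) : PowerSeries ℝ :=
  PowerSeries.mk fun n =>
    ∑ k ∈ Finset.range (n + 1), PowerSeries.coeff k f * PowerSeries.coeff n (g ^ k)

/-- The degenerate moment generating series `F_Y = Σ_{n≥0} E[(Y)_{n,λ}] X^n/n!`. -/
def momSeries (lam : ℝ) {Ω : Type*} [MeasurableSpace Ω] (μ : Measure Ω) (Y : Ω → ℝ) :
    PowerSeries ℝ :=
  PowerSeries.mk fun n => (∫ ω, dff lam (Y ω) n ∂μ) / (n.factorial : ℝ)

/-- Taylor series at `u = 0` of the degenerate logarithm `log_λ(1+u)`: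
`Σ_{n≥1} λ^{n-1} (1)_{n,1/λ} u^n/n!`. -/
def degLogSeries (lam : ℝ) : PowerSeries ℝ :=
  PowerSeries.mk fun n => if n = 0 then 0 else lam ^ (n - 1) * dff (1 / lam) 1 n / (n.factorial : ℝ)

/-- `G_Y`, the degenerate cumulant generating series `log_{-λ}(F_Y)`, i.e. the substitution of
`F_Y - 1` into the Taylor series of `log_{-λ}(1+u)`. -/
def cumSeries (lam : ℝ) {Ω : Type*} [MeasurableSpace Ω] (μ : Measure Ω) (Y : Ω → ℝ) :
    PowerSeries ℝ :=
  pscomp (degLogSeries (-lam)) (momSeries lam μ Y - 1)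

/-- The degenerate cumulants `κ_{n,λ}(Y) := n!·(coefficient of X^n in G_Y)`. -/
def degCumulant (lam : ℝ) {Ω : Type*} [MeasurableSpace Ω] (μ : Measure Ω) (Y : Ω → ℝ)
    (n : ℕ) : ℝ :=
  (n.factorial : ℝ) * PowerSeries.coeff n (cumSeries lam μ Y)

/-- The probabilistic degenerate Stirling numbers of the second kind
`{n brace k}_{Y,λ} := n!·(coefficient of X^n in (F_Y - 1)^k/k!)`. -/
def braceY (lam : ℝ) {Ω : Type*} [MeasurableSpace Ω] (μ : Measure Ω) (Y : Ω → ℝ)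
    (n k : ℕ) : ℝ :=
  (n.factorial : ℝ) * PowerSeries.coeff n ((momSeries lam μ Y - 1) ^ k) / (k.factorial : ℝ)

/-- The probabilistic degenerate Stirling numbers of the first kind, defined by
`(-1)^{n-k} S_{1,λ}^Y(n,k) := n!·(coefficient of X^n in G_Y^k/k!)`. -/
def S1Y (lam : ℝ) {Ω : Type*} [MeasurableSpace Ω] (μ : Measure Ω) (Y : Ω → ℝ)
    (n k : ℕ) : ℝ :=
  (-1 : ℝ) ^ (n - k) * ((n.factorial : ℝ) * PowerSeries.coeff n ((cumSeries lam μ Y) ^ k) / (k.factorial : ℝ))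

/-- Taylor series of `log(1+u)`: `Σ_{n≥1} (-1)^{n-1} u^n/n`. -/
def logSeries : PowerSeries ℝ :=
  PowerSeries.mk fun n => if n = 0 then 0 else (-1 : ℝ) ^ (n - 1) / n

/-- `F^x := exp (x · Log F)` for a power series `F` with constant term `1`. -/
def psPow (F : PowerSeries ℝ) (x : ℝ) : PowerSeries ℝ :=
  pscomp (PowerSeries.exp ℝ) (PowerSeries.C x * pscomp logSeries (F - 1))

/-- `F ↦ F/X`, i.e. the shift sending `Σ a_{n+1} X^{n+1}` (with `a_0 = 0`) to `Σ a_{n+1} X^n`. -/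
def shiftDown (F : PowerSeries ℝ) : PowerSeries ℝ :=
  PowerSeries.mk fun n => PowerSeries.coeff (n + 1) F

/-- The probabilistic degenerate Bernoulli polynomials associated with `Y`:
`Σ_{n≥0} β_{n,λ}^Y(x) X^n/n! = (X/(F_Y-1))·F_Y^x`. -/
def probBernoulli (lam : ℝ) {Ω : Type*} [MeasurableSpace Ω] (μ : Measure Ω) (Y : Ω → ℝ)
    (n : ℕ) (x : ℝ) : ℝ :=
  (n.factorial : ℝ) *
    PowerSeries.coeff n ((shiftDown (momSeries lam μ Y - 1))⁻¹ * psPow (momSeries lam μ Y) x)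

/-- The probabilistic degenerate Euler polynomials associated with `Y`:
`Σ_{n≥0} 𝓔_{n,λ}^Y(x) X^n/n! = (2/(F_Y+1))·F_Y^x`. -/
def probEuler (lam : ℝ) {Ω : Type*} [MeasurableSpace Ω] (μ : Measure Ω) (Y : Ω → ℝ)
    (n : ℕ) (x : ℝ) : ℝ :=
  (n.factorial : ℝ) *
    PowerSeries.coeff n
      (PowerSeries.C (2 : ℝ) * (momSeries lam μ Y + 1)⁻¹ * psPow (momSeries lam μ Y) x)


/-!
Write `F = F_Y` and `G = G_Y = log_{-λ} F = (F^{-λ} - 1)/(-λ)`. The exponential generating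
function of `⟨x⟩_{k,λ}` is `(1 - λt)^{-x/λ}`; substituting `t = G` gives `(F^{-λ})^{-x/λ} = F^x`.
Hence the generating function `(X/(F-1)) F^x` of `β_{n,λ}^Y(x)` is the product of the generating
function of `β_{n,λ}^Y` with `Σ_k ⟨x⟩_{k,λ} G^k/k!`, and comparing coefficients of this product of
exponential generating functions is the claimed identity.

The two binomial-series facts behind this, `exp (x log(1+X)) = (1+X)^x` and
`((1+X)^z)^y = (1+X)^{zy}`, follow from the fact that `(1+X)^y` is the only series with constant
term `1` solving `(1+X) A' = y A`.
-/

open PowerSeries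

namespace PowerSeries

theorem coeff_pow_eq_zero_of_lt {R : Type*} [CommSemiring R] {g : R⟦X⟧}
    (hg : constantCoeff g = 0) {n k : ℕ} (h : n < k) : coeff n (g ^ k) = 0 :=
  X_pow_dvd_iff.mp (pow_dvd_pow_of_dvd (X_dvd_iff.mpr hg) k) n h

theorem constantCoeff_subst_of_constantCoeff_eq_zero {R : Type*} [CommRing R] {f g : R⟦X⟧}
    (hg : constantCoeff g = 0) : constantCoeff (f.subst g) = constantCoeff f := by
  rw [← coeff_zero_eq_constantCoeff_apply, coeff_subst' (HasSubst.of_constantCoeff_zero' hg),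
    finsum_eq_single _ 0 fun d hd => by
      rw [coeff_pow_eq_zero_of_lt hg (Nat.pos_of_ne_zero hd), smul_zero]]
  simp

theorem subst_one {R : Type*} [CommRing R] (g : R⟦X⟧) : (1 : R⟦X⟧).subst g = 1 := by
  simpa using subst_C (a := g) (1 : R)

theorem factorial_mul_coeff_mul {R : Type*} [CommSemiring R] (A B : R⟦X⟧) (n : ℕ) :
    (n.factorial : R) * coeff n (A * B)
      = ∑ j ∈ range (n + 1),
          n.choose j * (j.factorial * coeff j A) * ((n - j).factorial * coeff (n - j) B) := by
  rw [coeff_mul, Nat.sum_antidiagonal_eq_sum_range_succ_mk, mul_sum]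
  refine sum_congr rfl fun j hj => ?_
  rw [← Nat.choose_mul_factorial_mul_factorial (Nat.le_of_lt_succ (mem_range.mp hj))]
  push_cast
  ring

theorem coeff_one_add_X_mul_derivative {R : Type*} [CommRing R] (A : R⟦X⟧) (n : ℕ) :
    coeff n ((1 + X) * d⁄dX R A) = ((n : R) + 1) * coeff (n + 1) A + n * coeff n A := by
  rw [add_mul, one_mul, map_add, coeff_derivative]
  rcases n with _ | n
  · simp
  · rw [coeff_succ_X_mul, coeff_derivative]
    push_cast
    ring

theorem one_add_X_mul_derivative_log {A : Type*} [CommRing A] [Algebra ℚ A] :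
    (1 + X) * d⁄dX A (log A) = 1 := by
  ext n
  rw [deriv_log, add_mul, one_mul, map_add, coeff_mk]
  rcases n with _ | n
  · simp
  · rw [coeff_succ_X_mul, coeff_mk, ← map_add, pow_succ]
    simp

theorem coeff_binomialSeries_eq_ffall (y : ℝ) (n : ℕ) :
    coeff n (binomialSeries ℝ y) = ffall y n / n.factorial := by
  rw [binomialSeries_coeff, Ring.choose_eq_smul, smul_eq_mul, smul_eq_mul, mul_one,
    ← Polynomial.aeval_eq_smeval, Polynomial.aeval_def, Polynomial.eval₂_eq_eval_map,
    descPochhammer_map, descPochhammer_eval_eq_prod_range, ffall, inv_mul_eq_div]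

theorem one_add_X_mul_derivative_binomialSeries (y : ℝ) :
    (1 + X) * d⁄dX ℝ (binomialSeries ℝ y) = C y * binomialSeries ℝ y := by
  ext n
  rw [coeff_one_add_X_mul_derivative, coeff_C_mul, coeff_binomialSeries_eq_ffall,
    coeff_binomialSeries_eq_ffall, ffall, ffall, prod_range_succ, Nat.factorial_succ]
  push_cast
  field_simp
  ring

theorem eq_binomialSeries_of_one_add_X_mul_derivative {A : ℝ⟦X⟧} {y : ℝ}
    (h0 : constantCoeff A = 1) (hA : (1 + X) * d⁄dX ℝ A = C y * A) :
    A = binomialSeries ℝ y := by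
  ext n
  induction n with
  | zero => simp [h0]
  | succ n ih =>
    have hAn := congrArg (coeff n) hA
    have hBn := congrArg (coeff n) (one_add_X_mul_derivative_binomialSeries y)
    rw [coeff_one_add_X_mul_derivative, coeff_C_mul] at hAn hBn
    have : ((n : ℝ) + 1) * coeff (n + 1) A = (n + 1) * coeff (n + 1) (binomialSeries ℝ y) := by
      linear_combination hAn - hBn + (y - n) * ih
    exact mul_left_cancel₀ (by positivity) this

theorem exp_subst_C_mul_log (x : ℝ) : (exp ℝ).subst (C x * log ℝ) = binomialSeries ℝ x := by
  have h0 : constantCoeff (C x * log ℝ) = 0 := by simp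
  apply eq_binomialSeries_of_one_add_X_mul_derivative
  · rw [constantCoeff_subst_of_constantCoeff_eq_zero h0, constantCoeff_exp]
  · rw [derivative_subst (HasSubst.of_constantCoeff_zero' h0), derivative_exp,
      Derivation.leibniz, derivative_C, smul_zero, add_zero, smul_eq_mul]
    linear_combination (C x * (exp ℝ).subst (C x * log ℝ)) * one_add_X_mul_derivative_log (A := ℝ)

theorem binomialSeries_subst_binomialSeries_sub_one (y z : ℝ) :
    (binomialSeries ℝ y).subst (binomialSeries ℝ z - 1) = binomialSeries ℝ (z * y) := by
  set g := binomialSeries ℝ z - 1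
  have h0 : constantCoeff g = 0 := by simp [g]
  have hs := HasSubst.of_constantCoeff_zero' h0
  have hB : (1 + X : ℝ⟦X⟧).subst g = binomialSeries ℝ z := by
    rw [subst_add hs, subst_one, subst_X hs]
    ring
  have hode := congrArg (subst g) (one_add_X_mul_derivative_binomialSeries y)
  rw [subst_mul hs, subst_mul hs, hB, subst_C] at hode
  change _ = C y * _ at hode
  apply eq_binomialSeries_of_one_add_X_mul_derivative
  · rw [constantCoeff_subst_of_constantCoeff_eq_zero h0, binomialSeries_constantCoeff]
  · rw [derivative_subst hs, map_sub, derivative_one, sub_zero, map_mul]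
    linear_combination (d⁄dX ℝ (binomialSeries ℝ y)).subst g *
      one_add_X_mul_derivative_binomialSeries z + C z * hode

end PowerSeries

theorem pscomp_eq_subst (f : ℝ⟦X⟧) {g : ℝ⟦X⟧} (hg : constantCoeff g = 0) :
    pscomp f g = f.subst g := by
  ext n
  rw [coeff_subst' (HasSubst.of_constantCoeff_zero' hg),
    finsum_eq_sum_of_support_subset (s := range (n + 1)), pscomp, coeff_mk]
  · simp only [smul_eq_mul]
  · intro d hd
    by_contra h
    exact hd (by beta_reduce; rw [coeff_pow_eq_zero_of_lt hg (by simpa using h), smul_zero])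

theorem logSeries_eq_log : logSeries = log ℝ := by
  ext n
  rcases n with _ | n
  · simp [logSeries]
  · simp [logSeries, pow_succ]

theorem psPow_eq_subst {F : ℝ⟦X⟧} (hF : constantCoeff F = 1) (x : ℝ) :
    psPow F x = (PowerSeries.binomialSeries ℝ x).subst (F - 1) := by
  have h0 : constantCoeff (F - 1) = 0 := by simp [hF]
  have hlog : constantCoeff (C x * log ℝ) = 0 := by simp
  have hxlog : constantCoeff (C x * (log ℝ).subst (F - 1)) = 0 := by
    simp [constantCoeff_subst_of_constantCoeff_eq_zero h0]
  have hs := HasSubst.of_constantCoeff_zero' h0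
  rw [psPow, pscomp_eq_subst _ h0, logSeries_eq_log, pscomp_eq_subst _ hxlog,
    ← exp_subst_C_mul_log, subst_comp_subst_apply (HasSubst.of_constantCoeff_zero' hlog) hs,
    subst_mul hs, subst_C]
  rfl

theorem degLogSeries_eq {c : ℝ} (hc : c ≠ 0) :
    degLogSeries c = C c⁻¹ * (PowerSeries.binomialSeries ℝ c - 1) := by
  ext n
  rw [coeff_C_mul, map_sub, coeff_binomialSeries_eq_ffall, coeff_one, degLogSeries, coeff_mk]
  rcases n with _ | n
  · simp [ffall]
  · have hprod : ffall c (n + 1) = c ^ (n + 1) * dff (1 / c) 1 (n + 1) := by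
      have := pow_card_mul_prod (s := range (n + 1)) (b := c) (f := fun i : ℕ => 1 - i * (1 / c))
      rw [card_range] at this
      rw [ffall, dff, this]
      exact prod_congr rfl fun i _ => by field_simp
    simp only [Nat.add_one_ne_zero, if_false, Nat.add_sub_cancel, sub_zero, hprod]
    field_simp
    ring

def drfSeries (lam x : ℝ) : ℝ⟦X⟧ := mk fun k => drf lam x k / k.factorial

theorem drfSeries_eq_rescale {lam : ℝ} (hlam : lam ≠ 0) (x : ℝ) :
    drfSeries lam x = rescale (-lam) (PowerSeries.binomialSeries ℝ (x / -lam)) := by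
  ext k
  have := pow_card_mul_prod (s := range k) (b := -lam) (f := fun i : ℕ => x / -lam - i)
  rw [card_range] at this
  rw [drfSeries, coeff_mk, coeff_rescale, coeff_binomialSeries_eq_ffall, mul_div_assoc', ffall,
    drf, this]
  congr 1
  refine prod_congr rfl fun i _ => ?_
  field_simp
  ring

theorem drfSeries_subst_degLogSeries {lam : ℝ} (hlam : lam ≠ 0) (x : ℝ) :
    (drfSeries lam x).subst (degLogSeries (-lam)) = PowerSeries.binomialSeries ℝ x := by
  have hc : -lam ≠ 0 := neg_ne_zero.mpr hlam
  have h0 : constantCoeff (degLogSeries (-lam)) = 0 := by simp [degLogSeries_eq hc]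
  have hs := HasSubst.of_constantCoeff_zero' h0
  rw [drfSeries_eq_rescale hlam, rescale_eq_subst, subst_comp_subst_apply (HasSubst.smul_X' _) hs,
    subst_smul hs, subst_X hs, degLogSeries_eq hc, smul_eq_C_mul, ← mul_assoc, ← map_mul,
    mul_inv_cancel₀ hc, map_one, one_mul, binomialSeries_subst_binomialSeries_sub_one,
    mul_div_cancel₀ _ hc]

section Moments

variable (lam : ℝ) {Ω : Type*} [MeasurableSpace Ω] (μ : Measure Ω) (Y : Ω → ℝ)

theorem constantCoeff_momSeries [IsProbabilityMeasure μ] :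
    constantCoeff (momSeries lam μ Y) = 1 := by
  simp [← coeff_zero_eq_constantCoeff_apply, momSeries, dff]

theorem psPow_momSeries_eq_pscomp_cumSeries [IsProbabilityMeasure μ] (hlam : lam ≠ 0) (x : ℝ) :
    psPow (momSeries lam μ Y) x = pscomp (drfSeries lam x) (cumSeries lam μ Y) := by
  have hF : constantCoeff (momSeries lam μ Y - 1) = 0 := by simp [constantCoeff_momSeries]
  have hL : constantCoeff (degLogSeries (-lam)) = 0 := by
    simp [degLogSeries_eq (neg_ne_zero.mpr hlam)]
  have hG : constantCoeff ((degLogSeries (-lam)).subst (momSeries lam μ Y - 1)) = 0 := by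
    rw [constantCoeff_subst_of_constantCoeff_eq_zero hF, hL]
  rw [psPow_eq_subst (constantCoeff_momSeries lam μ Y), ← drfSeries_subst_degLogSeries hlam,
    subst_comp_subst_apply (HasSubst.of_constantCoeff_zero' hL)
      (HasSubst.of_constantCoeff_zero' hF), cumSeries, pscomp_eq_subst _ hF, pscomp_eq_subst _ hG]

theorem probBernoulli_eval_zero [IsProbabilityMeasure μ] (n : ℕ) :
    probBernoulli lam μ Y n 0 = n.factorial * coeff n (shiftDown (momSeries lam μ Y - 1))⁻¹ := by
  rw [probBernoulli, psPow_eq_subst (constantCoeff_momSeries lam μ Y),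
    PowerSeries.binomialSeries_zero, subst_one, mul_one]

theorem neg_one_pow_mul_S1Y (n k : ℕ) :
    (-1) ^ (n - k) * S1Y lam μ Y n k
      = n.factorial * coeff n (cumSeries lam μ Y ^ k) / k.factorial := by
  rw [S1Y, ← mul_assoc, ← mul_pow, neg_one_mul, neg_neg, one_pow, one_mul]

theorem factorial_mul_coeff_pscomp_cumSeries (a : ℕ → ℝ) (n : ℕ) :
    n.factorial * coeff n (pscomp (mk fun k => a k / k.factorial) (cumSeries lam μ Y))
      = ∑ k ∈ range (n + 1), a k * ((-1) ^ (n - k) * S1Y lam μ Y n k) := by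
  rw [pscomp, coeff_mk, mul_sum]
  refine sum_congr rfl fun k _ => ?_
  rw [neg_one_pow_mul_S1Y, coeff_mk]
  ring

end Moments

theorem probBernoulli_eq_sum_S1Y_general {Ω : Type*} [MeasurableSpace Ω] (μ : MeasureTheory.Measure Ω)
    [MeasureTheory.IsProbabilityMeasure μ] (Y : Ω → ℝ)
    (lam : ℝ) (hlam : lam ≠ 0)
    (x : ℝ) (n : ℕ) :
    probBernoulli lam μ Y n x =
      ∑ j ∈ Finset.range (n + 1), ∑ k ∈ Finset.range (j + 1),
        (n.choose j : ℝ) * probBernoulli lam μ Y (n - j) 0 * drf lam x k *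
          (-1 : ℝ) ^ (j - k) * S1Y lam μ Y j k := by
  rw [probBernoulli, psPow_momSeries_eq_pscomp_cumSeries lam μ Y hlam, mul_comm (shiftDown _)⁻¹,
    factorial_mul_coeff_mul]
  refine sum_congr rfl fun j _ => ?_
  rw [drfSeries, factorial_mul_coeff_pscomp_cumSeries, probBernoulli_eval_zero, mul_sum, sum_mul]
  refine sum_congr rfl fun k _ => ?_
  ring

theorem probBernoulli_eq_sum_S1Y {Ω : Type*} [MeasurableSpace Ω] (μ : MeasureTheory.Measure Ω)
    [MeasureTheory.IsProbabilityMeasure μ] (Y : Ω → ℝ) (hY : Measurable Y)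
    (hmom : ∀ n : ℕ, MeasureTheory.Integrable (fun ω => |Y ω| ^ n) μ)
    (lam : ℝ) (hlam : lam ≠ 0)
    (hEY : (∫ ω, Y ω ∂μ) ≠ 0) (x : ℝ) (n : ℕ) :
    probBernoulli lam μ Y n x =
      ∑ j ∈ Finset.range (n + 1), ∑ k ∈ Finset.range (j + 1),
        (n.choose j : ℝ) * probBernoulli lam μ Y (n - j) 0 * drf lam x k *
          (-1 : ℝ) ^ (j - k) * S1Y lam μ Y j k :=
  probBernoulli_eq_sum_S1Y_general μ Y lam hlam x n

end
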